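/- Let (M,Q,l) be subextremal Reissner–Nordström–AdS parameters with two positive roots 0 < r_− < r_+ of Δ, and let α < 9/4. Then there exist ω₀ > 0, ℓ₀ ∈ ℕ, radii r₀, r₁ with r_+ < r₀ < r₁, and a constant c > 0 (all depending only on M, Q, l, α) such that for every integer ℓ ≥ ℓ₀ and every ω ∈ ℝ with |ω| ≤ 2ω₀ the following hold: (i) V_ℓ(r) − ω² + h(r)/(4l²) ≥ c·( ℓ(ℓ+1) + h(r) ) for all r ≥ r₀; and (ii) V_ℓ(r) − ω² ≥ 0 for all r ∈ [r₀, r₁]. -/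

import Mathlib

open Real

/-- The metric coefficient `h(r) = Δ(r)/r² = 1 − 2M/r + Q²/r² + r²/l²`. -/
noncomputable def hRNAdS (M Q l : ℝ) : ℝ → ℝ :=
  fun r => 1 - 2 * M / r + Q ^ 2 / r ^ 2 + r ^ 2 / l ^ 2

/-- The potential `V_ℓ(r) = h(r)·( h'(r)/r + ℓ(ℓ+1)/r² − α/l² )` of the radial o.d.e. -/
noncomputable def VRNAdS (M Q l α : ℝ) (ℓ : ℕ) : ℝ → ℝ :=
  fun r => hRNAdS M Q l r *
    (deriv (hRNAdS M Q l) r / r + ((ℓ : ℝ) * ((ℓ : ℝ) + 1)) / r ^ 2 - α / l ^ 2)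

/-! For `r ≥ 2M` one has `h(r) ≥ r²/l²`, and once `Q² ≤ Mr` the mass–charge part
`2(Mr − Q²)/r⁴` of `h'(r)/r` is nonnegative, so `h'(r)/r ≥ 2/l²`. Hence
`V_ℓ + h/(4l²) ≥ ℓ(ℓ+1)/l² + (9/4 − α) h/l²`, which absorbs `ω² ≤ 1/(4l²)` and gives (i) with
`c = min(1/(2l²), (9/4 − α)/l²)`. On a compact interval `h` is bounded, so for large `ℓ` the
term `c ℓ(ℓ+1)` in (i) dominates `h/(4l²)`, which gives (ii). -/

section

variable {M Q l r : ℝ}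

theorem hasDerivAt_hRNAdS (hr : r ≠ 0) :
    HasDerivAt (hRNAdS M Q l) (2 * M / r ^ 2 - 2 * Q ^ 2 / r ^ 3 + 2 * r / l ^ 2) r := by
  have hsq : HasDerivAt (fun x : ℝ => x ^ 2) (2 * r) r := by simpa using hasDerivAt_pow 2 r
  have H := ((((hasDerivAt_inv hr).const_mul (2 * M)).const_sub 1).add
    ((hsq.inv (pow_ne_zero 2 hr)).const_mul (Q ^ 2))).add (hsq.div_const (l ^ 2))
  have hfun : hRNAdS M Q l = fun x => 1 - 2 * M * x⁻¹ + Q ^ 2 * (x ^ 2)⁻¹ + x ^ 2 / l ^ 2 := by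
    funext x; simp only [hRNAdS]; ring
  rw [hfun]
  exact H.congr_deriv (by field_simp; ring)

theorem VRNAdS_eq (α : ℝ) (ℓ : ℕ) (hr : r ≠ 0) :
    VRNAdS M Q l α ℓ r = hRNAdS M Q l r *
      ((ℓ : ℝ) * ((ℓ : ℝ) + 1) / r ^ 2 + 2 * (M * r - Q ^ 2) / r ^ 4 + (2 - α) / l ^ 2) := by
  simp only [VRNAdS, (hasDerivAt_hRNAdS hr).deriv]
  field_simp
  ring

theorem inv_sq_le_hRNAdS_div_sq (hr : 0 < r) (hMr : 2 * M ≤ r) :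
    1 / l ^ 2 ≤ hRNAdS M Q l r / r ^ 2 := by
  have hsplit : hRNAdS M Q l r / r ^ 2 = 1 / l ^ 2 + (r - 2 * M) / r ^ 3 + Q ^ 2 / r ^ 4 := by
    simp only [hRNAdS]; field_simp; ring
  have h1 : 0 ≤ (r - 2 * M) / r ^ 3 := div_nonneg (by linarith) (by positivity)
  have h2 : 0 ≤ Q ^ 2 / r ^ 4 := by positivity
  linarith

theorem hRNAdS_nonneg (hr : 0 < r) (hMr : 2 * M ≤ r) : 0 ≤ hRNAdS M Q l r := by
  have hquot : 0 ≤ hRNAdS M Q l r / r ^ 2 :=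
    le_trans (by positivity) (inv_sq_le_hRNAdS_div_sq hr hMr)
  simpa [div_mul_cancel₀, hr.ne'] using mul_nonneg hquot (sq_nonneg r)

theorem le_VRNAdS_add_hRNAdS (α : ℝ) (ℓ : ℕ) (hr : 0 < r) (hMr : 2 * M ≤ r)
    (hQ : Q ^ 2 ≤ M * r) :
    (ℓ : ℝ) * ((ℓ : ℝ) + 1) / l ^ 2 + (9 / 4 - α) / l ^ 2 * hRNAdS M Q l r ≤
      VRNAdS M Q l α ℓ r + hRNAdS M Q l r / (4 * l ^ 2) := by
  set L : ℝ := (ℓ : ℝ) * ((ℓ : ℝ) + 1)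
  set h := hRNAdS M Q l r
  have hL : 0 ≤ L := by positivity
  have hh : 0 ≤ h := hRNAdS_nonneg hr hMr
  have hcentrifugal : L / l ^ 2 ≤ h * (L / r ^ 2) := by
    calc L / l ^ 2 = L * (1 / l ^ 2) := by ring
      _ ≤ L * (h / r ^ 2) := mul_le_mul_of_nonneg_left (inv_sq_le_hRNAdS_div_sq hr hMr) hL
      _ = h * (L / r ^ 2) := by ring
  have hmass : 0 ≤ h * (2 * (M * r - Q ^ 2) / r ^ 4) :=
    mul_nonneg hh (div_nonneg (by linarith) (by positivity))
  have hsplit : VRNAdS M Q l α ℓ r + h / (4 * l ^ 2) =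
      h * (L / r ^ 2) + h * (2 * (M * r - Q ^ 2) / r ^ 4) + (9 / 4 - α) / l ^ 2 * h := by
    rw [VRNAdS_eq α ℓ hr.ne']; ring
  linarith

theorem le_VRNAdS_sub_sq_add_hRNAdS (α : ℝ) {ℓ : ℕ} {ω : ℝ} (hr : 0 < r) (hMr : 2 * M ≤ r)
    (hQ : Q ^ 2 ≤ M * r) (hℓ : 1 ≤ ℓ) (hω : ω ^ 2 ≤ 1 / (4 * l ^ 2)) :
    min (1 / (2 * l ^ 2)) ((9 / 4 - α) / l ^ 2) * ((ℓ : ℝ) * ((ℓ : ℝ) + 1) + hRNAdS M Q l r) ≤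
      VRNAdS M Q l α ℓ r - ω ^ 2 + hRNAdS M Q l r / (4 * l ^ 2) := by
  set c := min (1 / (2 * l ^ 2)) ((9 / 4 - α) / l ^ 2)
  set L : ℝ := (ℓ : ℝ) * ((ℓ : ℝ) + 1)
  have hL : 1 ≤ L := by
    have : (1 : ℝ) ≤ ℓ := by exact_mod_cast hℓ
    nlinarith
  have hcL : c * L ≤ L / l ^ 2 - 1 / (4 * l ^ 2) := by
    have hslack : 0 ≤ (2 * L - 1) / (4 * l ^ 2) := div_nonneg (by linarith) (by positivity)
    calc c * L ≤ 1 / (2 * l ^ 2) * L := by gcongr; exact min_le_left _ _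
      _ = L / l ^ 2 - 1 / (4 * l ^ 2) - (2 * L - 1) / (4 * l ^ 2) := by ring
      _ ≤ L / l ^ 2 - 1 / (4 * l ^ 2) := sub_le_self _ hslack
  have hch : c * hRNAdS M Q l r ≤ (9 / 4 - α) / l ^ 2 * hRNAdS M Q l r :=
    mul_le_mul_of_nonneg_right (min_le_right _ _) (hRNAdS_nonneg hr hMr)
  have hbound := le_VRNAdS_add_hRNAdS (l := l) α ℓ hr hMr hQ
  linarith [mul_add c L (hRNAdS M Q l r)]

theorem hRNAdS_le_of_mem_Icc (hM : 0 ≤ M) {a b : ℝ} (ha : 0 < a) (hr : r ∈ Set.Icc a b) :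
    hRNAdS M Q l r ≤ 1 + Q ^ 2 / a ^ 2 + b ^ 2 / l ^ 2 := by
  obtain ⟨har, hrb⟩ := hr
  have hr0 : 0 < r := ha.trans_le har
  have h1 : 0 ≤ 2 * M / r := by positivity
  have h2 : Q ^ 2 / r ^ 2 ≤ Q ^ 2 / a ^ 2 := by gcongr
  have h3 : r ^ 2 / l ^ 2 ≤ b ^ 2 / l ^ 2 := by gcongr
  simp only [hRNAdS]
  linarith

end

theorem stmt5_general (M Q l α : ℝ) (hM : 0 < M) (hl : 0 < l) (hα : α < 9 / 4)
    (rp : ℝ) :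
    ∃ ω₀ : ℝ, 0 < ω₀ ∧ ∃ ℓ₀ : ℕ, ∃ r₀ r₁ : ℝ, rp < r₀ ∧ r₀ < r₁ ∧
      ∃ c : ℝ, 0 < c ∧
        ∀ ℓ : ℕ, ℓ₀ ≤ ℓ → ∀ ω : ℝ, |ω| ≤ 2 * ω₀ →
          (∀ r : ℝ, r₀ ≤ r →
            c * ((ℓ : ℝ) * ((ℓ : ℝ) + 1) + hRNAdS M Q l r) ≤
              VRNAdS M Q l α ℓ r - ω ^ 2 + hRNAdS M Q l r / (4 * l ^ 2)) ∧
          (∀ r ∈ Set.Icc r₀ r₁, 0 ≤ VRNAdS M Q l α ℓ r - ω ^ 2) := by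
  set c := min (1 / (2 * l ^ 2)) ((9 / 4 - α) / l ^ 2)
  have hc : 0 < c := lt_min (by positivity) (div_pos (by linarith) (by positivity))
  set r₀ := max rp (2 * M + Q ^ 2 / M) + 1
  set r₁ := r₀ + 1
  set H := 1 + Q ^ 2 / r₀ ^ 2 + r₁ ^ 2 / l ^ 2
  have hr₀ : 2 * M + Q ^ 2 / M < r₀ := by linarith [le_max_right rp (2 * M + Q ^ 2 / M)]
  have hQM : 0 ≤ Q ^ 2 / M := by positivity
  refine ⟨1 / (4 * l), by positivity, ⌈H / (4 * l ^ 2 * c)⌉₊ + 1, r₀, r₁,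
    by linarith [le_max_left rp (2 * M + Q ^ 2 / M)], by linarith, c, hc, ?_⟩
  intro ℓ hℓ ω hω
  have hω2 : ω ^ 2 ≤ 1 / (4 * l ^ 2) := by
    calc ω ^ 2 = |ω| ^ 2 := (sq_abs ω).symm
      _ ≤ (2 * (1 / (4 * l))) ^ 2 := pow_le_pow_left₀ (abs_nonneg ω) hω 2
      _ = 1 / (4 * l ^ 2) := by field_simp; ring
  have far : ∀ r, r₀ ≤ r → c * ((ℓ : ℝ) * ((ℓ : ℝ) + 1) + hRNAdS M Q l r) ≤
      VRNAdS M Q l α ℓ r - ω ^ 2 + hRNAdS M Q l r / (4 * l ^ 2) := fun r hr =>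
    le_VRNAdS_sub_sq_add_hRNAdS α (by linarith) (by linarith)
      ((div_le_iff₀' hM).mp (by linarith)) (by omega) hω2
  refine ⟨far, fun r hr => ?_⟩
  have hℓH : H / (4 * l ^ 2 * c) ≤ ℓ := Nat.ceil_le.mp (by omega)
  have hcℓ : H / (4 * l ^ 2) ≤ c * ((ℓ : ℝ) * ((ℓ : ℝ) + 1)) := by
    calc H / (4 * l ^ 2) = c * (H / (4 * l ^ 2 * c)) := by field_simp
      _ ≤ c * ℓ := by gcongr
      _ ≤ c * ((ℓ : ℝ) * ((ℓ : ℝ) + 1)) := by gcongr; nlinarith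
  have hhH : hRNAdS M Q l r / (4 * l ^ 2) ≤ H / (4 * l ^ 2) := by
    gcongr; exact hRNAdS_le_of_mem_Icc hM.le (by linarith) hr
  have hh : 0 ≤ c * hRNAdS M Q l r :=
    mul_nonneg hc.le (hRNAdS_nonneg (by linarith [hr.1]) (by linarith [hr.1]))
  linarith [far r hr.1, mul_add c ((ℓ : ℝ) * ((ℓ : ℝ) + 1)) (hRNAdS M Q l r)]

/-- Quantitative lower bounds for the potential at bounded frequencies:
there are `ω₀ > 0`, `ℓ₀`, radii `r₊ < r₀ < r₁` and `c > 0` such that for all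
`ℓ ≥ ℓ₀` and `|ω| ≤ 2ω₀`: (i) `V_ℓ − ω² + h/(4l²) ≥ c(ℓ(ℓ+1) + h)` for `r ≥ r₀`,
and (ii) `V_ℓ − ω² ≥ 0` on `[r₀, r₁]`. -/
theorem stmt5 (M Q l α : ℝ) (hM : 0 < M) (hl : 0 < l) (hα : α < 9 / 4)
    (rm rp : ℝ) (hrm : 0 < rm) (hrmrp : rm < rp)
    (hΔm : rm ^ 2 - 2 * M * rm + rm ^ 4 / l ^ 2 + Q ^ 2 = 0)
    (hΔp : rp ^ 2 - 2 * M * rp + rp ^ 4 / l ^ 2 + Q ^ 2 = 0)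
    (hroots : ∀ r : ℝ, 0 < r →
      r ^ 2 - 2 * M * r + r ^ 4 / l ^ 2 + Q ^ 2 = 0 → r = rm ∨ r = rp) :
    ∃ ω₀ : ℝ, 0 < ω₀ ∧ ∃ ℓ₀ : ℕ, ∃ r₀ r₁ : ℝ, rp < r₀ ∧ r₀ < r₁ ∧
      ∃ c : ℝ, 0 < c ∧
        ∀ ℓ : ℕ, ℓ₀ ≤ ℓ → ∀ ω : ℝ, |ω| ≤ 2 * ω₀ →
          (∀ r : ℝ, r₀ ≤ r →
            c * ((ℓ : ℝ) * ((ℓ : ℝ) + 1) + hRNAdS M Q l r) ≤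
              VRNAdS M Q l α ℓ r - ω ^ 2 + hRNAdS M Q l r / (4 * l ^ 2)) ∧
          (∀ r ∈ Set.Icc r₀ r₁, 0 ≤ VRNAdS M Q l α ℓ r - ω ^ 2) :=
  stmt5_general M Q l α hM hl hα rp
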